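/- arXiv:1110.3211 — 2 statements merged into one kernel-verified Lean document; each statement's English description precedes it below -/
import Mathlib

section
/- The double-tree of degree d >= 2 and height h >= 2 is d-connected. -/
/-- Vertices of a complete `d`-ary tree of height `h` are lists of child
indices (root-to-vertex paths): entries `< d`, length `≤ h`.  A vertex of the
double-tree is such a list tagged with the half (`true` = upper). -/
def dtValid (d h : ℕ) (p : Bool × List ℕ) : Prop :=
  p.2.length ≤ h ∧ ∀ x ∈ p.2, x < d

/-- Leaves are the vertices at depth exactly `h`. -/
def dtLeaf (h : ℕ) (p : Bool × List ℕ) : Prop := p.2.length = h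

/-- Left-to-right (0-based) index of a leaf: the value of its digit list in
base `d`.  The leaf named `u^j_n` (or `v^j_n`), `1 ≤ j ≤ l = d^(h-1)`,
`1 ≤ n ≤ d`, has index `(j-1)*d + (n-1)`. -/
def dtOrd (d : ℕ) (l : List ℕ) : ℕ := l.foldl (fun a x => a * d + x) 0

/-- The cross edges `E₂` in terms of the 0-based leaf indices `s` (upper) and
`t` (lower): `u^j_n ~ v^j_m` for `n ≤ m`, `u^j_n ~ v^(j+1)_m` for `m < n`, and
`u^l_n ~ v^1_m` for `m < n`. -/
def dtCross (d h s t : ℕ) : Prop :=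
  (s / d = t / d ∧ s % d ≤ t % d) ∨
  (t / d = s / d + 1 ∧ t % d < s % d) ∨
  (s / d + 1 = d ^ (h - 1) ∧ t / d = 0 ∧ t % d < s % d)

/-- The double-tree of degree `d` and height `h`: two complete `d`-ary trees
of height `h`, leaf edges `E₁` joining consecutive leaves inside each half,
and cross edges `E₂` between the two leaf rows. -/
def doubleTree (d h : ℕ) : SimpleGraph (Bool × List ℕ) :=
  SimpleGraph.fromRel (fun p q =>
    dtValid d h p ∧ dtValid d h q ∧
    ((p.1 = q.1 ∧ ∃ a, q.2 = p.2 ++ [a]) ∨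
     (p.1 = q.1 ∧ dtLeaf h p ∧ dtLeaf h q ∧ dtOrd d q.2 = dtOrd d p.2 + 1) ∨
     (p.1 = true ∧ q.1 = false ∧ dtLeaf h p ∧ dtLeaf h q ∧
       dtCross d h (dtOrd d p.2) (dtOrd d q.2))))

/-- The digit list of the leaf with 0-based index `t`. -/
def dtLeafList (d h t : ℕ) : List ℕ :=
  (List.range h).map (fun i => t / d ^ (h - 1 - i) % d)

/-- The upper leaf with 0-based index `t` (`u^j_n` for `t = (j-1)*d+(n-1)`). -/
def uLeaf (d h t : ℕ) : Bool × List ℕ := (true, dtLeafList d h t)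

/-- The lower leaf with 0-based index `t`. -/
def vLeaf (d h t : ℕ) : Bool × List ℕ := (false, dtLeafList d h t)

/-!
Every surviving vertex walks down its own tree to a surviving leaf: a vertex has `d` children
and fewer than `d` vertices are deleted. So it suffices to connect the surviving leaves, and for
this the cross edges alone are enough. In terms of leaf indices modulo `L = d ^ h`, they join
`u_i` to `v_i, …, v_(i+d-1)`. Since `d * d ≤ L`, some window of `d` consecutive indices has no
deleted leaf; its leaves are connected. A surviving leaf cut off from this window is impossible:
reading round the cycle from the window back to it, the last cut-off `u_i` and the first cut-off
`v_j` force `d` distinct columns `{u_x, v_x}` to contain a deleted vertex.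
-/

namespace SimpleGraph

variable {α : Type*} (G : SimpleGraph α)

def ReachableIn (s : Set α) (x y : α) : Prop :=
  ∃ (hx : x ∈ s) (hy : y ∈ s), (G.induce s).Reachable ⟨x, hx⟩ ⟨y, hy⟩

variable {G} {s : Set α} {x y z : α}

lemma ReachableIn.refl (hx : x ∈ s) : G.ReachableIn s x x := ⟨hx, hx, .refl _⟩

lemma ReachableIn.symm (h : G.ReachableIn s x y) : G.ReachableIn s y x :=
  let ⟨hx, hy, r⟩ := h
  ⟨hy, hx, r.symm⟩

lemma ReachableIn.trans (h₁ : G.ReachableIn s x y) (h₂ : G.ReachableIn s y z) :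
    G.ReachableIn s x z :=
  let ⟨hx, _, r₁⟩ := h₁
  let ⟨_, hz, r₂⟩ := h₂
  ⟨hx, hz, r₁.trans r₂⟩

lemma Adj.reachableIn (h : G.Adj x y) (hx : x ∈ s) (hy : y ∈ s) : G.ReachableIn s x y :=
  ⟨hx, hy, Adj.reachable (G := G.induce s) h⟩

lemma induce_connected_of_reachableIn (hx : x ∈ s) (h : ∀ y ∈ s, G.ReachableIn s y x) :
    (G.induce s).Connected :=
  G.induce_connected_of_patches x hx fun hy =>
    let ⟨_, _, r⟩ := (h _ hy).symm
    ⟨s, subset_rfl, _, _, r⟩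

end SimpleGraph

lemma exists_lt_notMem_of_ncard_lt {α : Type*} {S : Set α} (hS : S.Finite) {d : ℕ}
    (hcard : S.ncard < d) {f : ℕ → α} (hf : Set.InjOn f (Set.Iio d)) :
    ∃ a < d, f a ∉ S := by
  by_contra! H
  have := Set.ncard_le_ncard_of_injOn (s := Set.Iio d) f H hf hS
  rw [Set.ncard_Iio_nat] at this
  omega

lemma Function.Periodic.injOn_Iio_add_left {α : Type*} {f : ℕ → α} {L : ℕ}
    (hf : Function.Periodic f L) (hinj : Set.InjOn f (Set.Iio L)) (k : ℕ) :
    Set.InjOn (fun i => f (k + i)) (Set.Iio L) := fun i hi j hj e => by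
  have hL : 0 < L := lt_of_le_of_lt (Nat.zero_le i) hi
  have hmod : (k + i) % L = (k + j) % L := hinj (Nat.mod_lt _ hL) (Nat.mod_lt _ hL)
    (by simpa only [hf.map_mod_nat] using e)
  have := Nat.ModEq.add_left_cancel' k hmod
  rwa [Nat.ModEq, Nat.mod_eq_of_lt hi, Nat.mod_eq_of_lt hj] at this

structure IsCyclicBand {α : Type*} (G : SimpleGraph α) (d L : ℕ) (u v : ℕ → α) : Prop where
  periodic_u : Function.Periodic u L
  periodic_v : Function.Periodic v L
  injOn_u : Set.InjOn u (Set.Iio L)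
  injOn_v : Set.InjOn v (Set.Iio L)
  u_ne_v : ∀ i j, u i ≠ v j
  adj : ∀ i {k}, k < d → G.Adj (u i) (v (i + k))

namespace IsCyclicBand

variable {α : Type*} {G : SimpleGraph α} {d L : ℕ} {u v : ℕ → α} {T S : Set α}

lemma shift (hb : IsCyclicBand G d L u v) (k : ℕ) :
    IsCyclicBand G d L (fun i => u (k + i)) (fun i => v (k + i)) where
  periodic_u i := by simp only [← add_assoc, hb.periodic_u _]
  periodic_v i := by simp only [← add_assoc, hb.periodic_v _]
  injOn_u := hb.periodic_u.injOn_Iio_add_left hb.injOn_u k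
  injOn_v := hb.periodic_v.injOn_Iio_add_left hb.injOn_v k
  u_ne_v _ _ := hb.u_ne_v _ _
  adj i _ hk := by simpa only [add_assoc] using hb.adj (k + i) hk

lemma card_le_ncard (hb : IsCyclicBand G d L u v) (hS : S.Finite) {I : Finset ℕ}
    (hI : ∀ x ∈ I, x < L ∧ (u x ∈ S ∨ v x ∈ S)) : I.card ≤ S.ncard := by
  classical
  rw [← Set.ncard_coe_finset]
  refine Set.ncard_le_ncard_of_injOn (fun x => if u x ∈ S then u x else v x)
    (fun x hx => ?_) (fun x hx y hy e => ?_) hS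
  · have := (hI x hx).2
    split_ifs with h
    exacts [h, this.resolve_left h]
  · have hx := (hI x hx).1
    have hy := (hI y hy).1
    simp only at e
    split_ifs at e
    exacts [hb.injOn_u hx hy e, (hb.u_ne_v _ _ e).elim, (hb.u_ne_v _ _ e.symm).elim,
      hb.injOn_v hx hy e]

lemma exists_clean_window (hb : IsCyclicBand G d L u v) (hL : d * d ≤ L) (hS : S.Finite)
    (hcard : S.ncard < d) : ∃ k, ∀ c < d, u (k + c) ∉ S ∧ v (k + c) ∉ S := by
  by_contra! H
  choose c hc hcS using H
  have hd : 0 < d := by omega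
  have hdiv : ∀ j, (j * d + c (j * d)) / d = j := fun j =>
    ((Nat.div_mod_unique hd).2 ⟨by ring, hc (j * d)⟩).1
  have := hb.card_le_ncard hS (I := (Finset.range d).image fun j => j * d + c (j * d)) (by
    simp only [Finset.mem_image, Finset.mem_range]
    rintro _ ⟨j, hj, rfl⟩
    have := Nat.mul_le_mul_right d (hj : j + 1 ≤ d)
    refine ⟨by nlinarith [hc (j * d)], ?_⟩
    by_cases hu : u (j * d + c (j * d)) ∈ S
    exacts [Or.inl hu, Or.inr (hcS _ hu)])
  rw [Finset.card_image_of_injOn fun j _ j' _ e => by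
    simpa only [hdiv] using congrArg (· / d) e, Finset.card_range] at this
  omega

lemma reachableIn_u_v (hb : IsCyclicBand G d L u v) (hT : ∀ i, u i ∈ T ∧ v i ∈ T) {i k : ℕ}
    (hk : k < d) (hu : u i ∉ S) (hv : v (i + k) ∉ S) :
    G.ReachableIn (T \ S) (u i) (v (i + k)) :=
  (hb.adj i hk).reachableIn ⟨(hT i).1, hu⟩ ⟨(hT _).2, hv⟩

lemma reachableIn_window (hb : IsCyclicBand G d L u v) (hT : ∀ i, u i ∈ T ∧ v i ∈ T)
    (hclean : ∀ c < d, u c ∉ S ∧ v c ∉ S) {p : ℕ} (hp : p < d ∨ L ≤ p ∧ p < L + d) :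
    G.ReachableIn (T \ S) (u p) (u 0) ∧ G.ReachableIn (T \ S) (v p) (u 0) := by
  wlog hpd : p < d generalizing p
  · have hpL : p - L + L = p := Nat.sub_add_cancel (by omega)
    rw [← hpL, hb.periodic_u, hb.periodic_v]
    exact this (by omega) (by omega)
  have hv : ∀ c < d, G.ReachableIn (T \ S) (v c) (u 0) := fun c hc => by
    simpa using (hb.reachableIn_u_v hT hc (hclean 0 (by omega)).1
      (by simpa using (hclean c hc).2)).symm
  have hup := hb.reachableIn_u_v hT (k := d - 1 - p) (by omega) (hclean p hpd).1
    (by rw [show p + (d - 1 - p) = d - 1 by omega]; exact (hclean _ (by omega)).2)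
  rw [show p + (d - 1 - p) = d - 1 by omega] at hup
  exact ⟨hup.trans (hv _ (by omega)), hv p hpd⟩

lemma le_of_not_reachableIn_v (hb : IsCyclicBand G d L u v) (hT : ∀ i, u i ∈ T ∧ v i ∈ T)
    (hclean : ∀ c < d, u c ∉ S ∧ v c ∉ S) {j : ℕ}
    (hj : ¬ G.ReachableIn (T \ S) (v j) (u 0)) : d ≤ j := by
  by_contra! hjd
  exact hj (hb.reachableIn_window hT hclean (Or.inl hjd)).2

lemma card_lt_of_clean_window (hb : IsCyclicBand G d L u v) (hS : S.Finite)
    (hcard : S.ncard < d) (hclean : ∀ c < d, u c ∉ S ∧ v c ∉ S) {I : Finset ℕ}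
    (hI : ∀ x ∈ I, x < L + d ∧ (u x ∈ S ∨ v x ∈ S)) : I.card < d := by
  refine (hb.card_le_ncard hS fun x hx => ⟨?_, (hI x hx).2⟩).trans_lt hcard
  by_contra! hxL
  obtain ⟨hxd, hhit⟩ := hI x hx
  have hx : x - L + L = x := Nat.sub_add_cancel hxL
  have := hclean (x - L) (by omega)
  rw [← hx, hb.periodic_u, hb.periodic_v] at hhit
  exact hhit.elim this.1 this.2

lemma mem_or_mem_of_last (hb : IsCyclicBand G d L u v) (hT : ∀ i, u i ∈ T ∧ v i ∈ T)
    {x₀ : α} {i : ℕ} (hi : u i ∉ S) (hbad : ¬ G.ReachableIn (T \ S) (u i) x₀)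
    (hlast : ∀ y, i < y → y < i + d → ¬ (u y ∉ S ∧ ¬ G.ReachableIn (T \ S) (u y) x₀))
    {x : ℕ} (hix : i < x) (hx : x < i + d) : u x ∈ S ∨ v x ∈ S := by
  by_contra! h
  have hix' : i + (x - i) = x := Nat.add_sub_cancel' hix.le
  have hux := hb.reachableIn_u_v hT (i := x) (k := 0) (by omega) h.1 h.2
  have hui := hb.reachableIn_u_v hT (k := x - i) (by omega) hi (by rw [hix']; exact h.2)
  rw [hix'] at hui
  exact hbad (hui.trans (hux.symm.trans (not_not.1 fun hr => hlast x hix hx ⟨h.1, hr⟩)))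

lemma mem_or_mem_of_first (hb : IsCyclicBand G d L u v) (hT : ∀ i, u i ∈ T ∧ v i ∈ T)
    {x₀ : α} {j : ℕ} (hj : v j ∉ S) (hbad : ¬ G.ReachableIn (T \ S) (v j) x₀)
    (hfirst : ∀ y < j, ¬ (v y ∉ S ∧ ¬ G.ReachableIn (T \ S) (v y) x₀))
    {x : ℕ} (hx : j < x + d) (hxj : x < j) : u x ∈ S ∨ v x ∈ S := by
  by_contra! h
  have hxj' : x + (j - x) = j := Nat.add_sub_cancel' hxj.le
  have hux := hb.reachableIn_u_v hT (i := x) (k := 0) (by omega) h.1 h.2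
  have huj := hb.reachableIn_u_v hT (k := j - x) (by omega) h.1 (by rw [hxj']; exact hj)
  rw [hxj'] at huj
  exact hbad (huj.symm.trans (hux.trans (not_not.1 fun hr => hfirst x hxj ⟨h.2, hr⟩)))

lemma reachableIn_u_of_clean_window (hb : IsCyclicBand G d L u v) (hd : 2 ≤ d)
    (hT : ∀ i, u i ∈ T ∧ v i ∈ T) (hS : S.Finite) (hcard : S.ncard < d)
    (hclean : ∀ c < d, u c ∉ S ∧ v c ∉ S) {p : ℕ} (hp : p < L) (hpS : u p ∉ S) :
    G.ReachableIn (T \ S) (u p) (u 0) := by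
  classical
  by_contra hPu
  set R := fun x => G.ReachableIn (T \ S) x (u 0)
  set i := Nat.findGreatest (fun p => u p ∉ S ∧ ¬ R (u p)) L
  have hi : u i ∉ S ∧ ¬ R (u i) :=
    Nat.findGreatest_spec hp.le (P := fun p => u p ∉ S ∧ ¬ R (u p)) ⟨hpS, hPu⟩
  have hiL : i ≤ L := Nat.findGreatest_le L
  have hafter (x : ℕ) (hix : i < x) (hx : x < i + d) : u x ∈ S ∨ v x ∈ S := by
    refine hb.mem_or_mem_of_last hT hi.1 hi.2 (fun y hiy hy hPy => ?_) hix hx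
    rcases le_or_gt y L with hyL | hyL
    · exact Nat.findGreatest_is_greatest (P := fun p => u p ∉ S ∧ ¬ R (u p)) hiy hyL hPy
    · exact hPy.2 (hb.reachableIn_window hT hclean (Or.inr ⟨hyL.le, by omega⟩)).1
  by_cases hvi : v i ∈ S
  · refine (hb.card_lt_of_clean_window hS hcard hclean (I := Finset.Ico i (i + d))
      fun x hx => ?_).ne (by simp)
    rw [Finset.mem_Ico] at hx
    refine ⟨by omega, ?_⟩
    rcases hx.1.eq_or_lt with rfl | hix
    exacts [Or.inr hvi, hafter x hix hx.2]
  have hvi' : ¬ R (v i) := fun hr =>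
    hi.2 ((hb.reachableIn_u_v hT (k := 0) (by omega) hi.1 hvi).trans hr)
  have hPv : ∃ j, v j ∉ S ∧ ¬ R (v j) := ⟨i, hvi, hvi'⟩
  have hj := Nat.find_spec hPv
  have hji : Nat.find hPv ≤ i := Nat.find_min' hPv ⟨hvi, hvi'⟩
  have hdj := hb.le_of_not_reachableIn_v hT hclean hj.2
  have hbefore := hb.mem_or_mem_of_first hT hj.1 hj.2 (fun y hy => Nat.find_min hPv hy)
    (x := Nat.find hPv - 1) (by omega) (by omega)
  refine (hb.card_lt_of_clean_window hS hcard hclean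
    (I := insert (Nat.find hPv - 1) (Finset.Ioo i (i + d))) fun x hx => ?_).ne ?_
  · rcases Finset.mem_insert.1 hx with rfl | hx
    · exact ⟨by omega, hbefore⟩
    · rw [Finset.mem_Ioo] at hx
      exact ⟨by omega, hafter x hx.1 hx.2⟩
  · rw [Finset.card_insert_of_notMem (by simp only [Finset.mem_Ioo]; omega), Nat.card_Ioo]
    omega

theorem reachableIn_of_clean_window (hb : IsCyclicBand G d L u v) (hd : 2 ≤ d) (hL : 0 < L)
    (hT : ∀ i, u i ∈ T ∧ v i ∈ T) (hS : S.Finite) (hcard : S.ncard < d)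
    (hclean : ∀ c < d, u c ∉ S ∧ v c ∉ S) (i : ℕ) :
    (u i ∉ S → G.ReachableIn (T \ S) (u i) (u 0)) ∧
      (v i ∉ S → G.ReachableIn (T \ S) (v i) (u 0)) := by
  classical
  rw [← hb.periodic_u.map_mod_nat i, ← hb.periodic_v.map_mod_nat i]
  have hu {p : ℕ} := hb.reachableIn_u_of_clean_window hd hT hS hcard hclean (p := p)
  refine ⟨hu (Nat.mod_lt _ hL), fun hv => ?_⟩
  by_contra hPv'
  have hPv : ∃ j, v j ∉ S ∧ ¬ G.ReachableIn (T \ S) (v j) (u 0) := ⟨_, hv, hPv'⟩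
  have hj := Nat.find_spec hPv
  have hjL : Nat.find hPv < L := (Nat.find_min' hPv ⟨hv, hPv'⟩).trans_lt (Nat.mod_lt _ hL)
  have hdj := hb.le_of_not_reachableIn_v hT hclean hj.2
  have hcol : u (Nat.find hPv) ∈ S := by
    by_contra huj
    exact hj.2 ((hb.reachableIn_u_v hT (k := 0) (by omega) huj hj.1).symm.trans (hu hjL huj))
  refine (hb.card_lt_of_clean_window hS hcard hclean
    (I := Finset.Ioc (Nat.find hPv - d) (Nat.find hPv)) fun x hx => ?_).ne (by simp; omega)
  rw [Finset.mem_Ioc] at hx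
  refine ⟨by omega, ?_⟩
  rcases hx.2.eq_or_lt with rfl | hxj
  · exact Or.inl hcol
  · exact hb.mem_or_mem_of_first hT hj.1 hj.2 (fun y hy => Nat.find_min hPv hy) (by omega) hxj

theorem exists_hub (hb : IsCyclicBand G d L u v) (hd : 2 ≤ d) (hL : d * d ≤ L)
    (hT : ∀ i, u i ∈ T ∧ v i ∈ T) (hS : S.Finite) (hcard : S.ncard < d) :
    ∃ x₀ ∈ T \ S, ∀ i, (u i ∉ S → G.ReachableIn (T \ S) (u i) x₀) ∧
      (v i ∉ S → G.ReachableIn (T \ S) (v i) x₀) := by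
  obtain ⟨k, hk⟩ := hb.exists_clean_window hL hS hcard
  refine ⟨u k, ⟨(hT k).1, (hk 0 (by omega)).1⟩, fun i => ?_⟩
  have hkL : k ≤ i + k * L := le_add_left (Nat.le_mul_of_pos_right k (by nlinarith))
  have := (hb.shift k).reachableIn_of_clean_window hd (by nlinarith) (fun i => hT (k + i)) hS
    hcard hk (i + k * L - k)
  have hu : u (i + k * L) = u i := by simpa using hb.periodic_u.nat_mul k i
  have hv : v (i + k * L) = v i := by simpa using hb.periodic_v.nat_mul k i
  simpa only [Nat.add_sub_cancel' hkL, hu, hv, add_zero] using this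

end IsCyclicBand

lemma dtOrd_append (d : ℕ) (l : List ℕ) (x : ℕ) :
    dtOrd d (l ++ [x]) = dtOrd d l * d + x := by
  simp [dtOrd]

lemma dtLeafList_succ (d h t : ℕ) :
    dtLeafList d (h + 1) t = dtLeafList d h (t / d) ++ [t % d] := by
  rw [dtLeafList, List.range_succ, List.map_append]
  congr 1
  · refine List.map_congr_left fun i hi => ?_
    rw [List.mem_range] at hi
    rw [show h + 1 - 1 - i = h - 1 - i + 1 by omega, pow_succ', Nat.div_div_eq_div_mul]
  · simp

lemma dtLeafList_length (d h t : ℕ) : (dtLeafList d h t).length = h := by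
  simp [dtLeafList]

lemma dtOrd_dtLeafList (d h t : ℕ) : dtOrd d (dtLeafList d h t) = t % d ^ h := by
  induction h generalizing t with
  | zero => simp [dtLeafList, dtOrd, Nat.mod_one]
  | succ h ih =>
    rw [dtLeafList_succ, dtOrd_append, ih, pow_succ', Nat.mod_mul]
    ring

lemma dtLeafList_dtOrd {d : ℕ} {l : List ℕ} (hl : ∀ x ∈ l, x < d) :
    dtLeafList d l.length (dtOrd d l) = l := by
  induction l using List.reverseRecOn with
  | nil => rfl
  | append_singleton l x ih =>
    have hx : x < d := hl x (by simp)
    obtain ⟨hdiv, hmod⟩ := (Nat.div_mod_unique (by omega : 0 < d)).2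
      ⟨(by ring : x + d * dtOrd d l = dtOrd d l * d + x), hx⟩
    rw [List.length_append, List.length_singleton, dtLeafList_succ, dtOrd_append, hdiv, hmod,
      ih fun y hy => hl y (by simp [hy])]

lemma dtValid_dtLeafList {d : ℕ} (hd : 0 < d) (h : ℕ) (b : Bool) (t : ℕ) :
    dtValid d h (b, dtLeafList d h t) := by
  refine ⟨(dtLeafList_length d h t).le, fun x hx => ?_⟩
  obtain ⟨i, -, rfl⟩ := List.mem_map.1 hx
  exact Nat.mod_lt _ hd

lemma dtLeafList_mod {d : ℕ} (hd : 0 < d) (h t : ℕ) :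
    dtLeafList d h (t % d ^ h) = dtLeafList d h t := by
  have := dtLeafList_dtOrd (dtValid_dtLeafList hd h true t).2
  rwa [dtLeafList_length, dtOrd_dtLeafList] at this

lemma dtLeafList_eq_iff {d : ℕ} (hd : 0 < d) (h s t : ℕ) :
    dtLeafList d h s = dtLeafList d h t ↔ s % d ^ h = t % d ^ h := by
  refine ⟨fun e => ?_, fun e => by rw [← dtLeafList_mod hd, e, dtLeafList_mod hd]⟩
  simpa only [dtOrd_dtLeafList] using congrArg (dtOrd d) e

lemma dtCross_add {d h s k : ℕ} (hd : 0 < d) (hh : 1 ≤ h) (hs : s < d ^ h) (hk : k < d) :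
    dtCross d h s ((s + k) % d ^ h) := by
  have hL : d ^ h = d ^ (h - 1) * d := by rw [← pow_succ]; congr 1; omega
  unfold dtCross
  rw [hL] at hs ⊢
  generalize d ^ (h - 1) = M at hs ⊢
  obtain ⟨q, r, hr, rfl⟩ : ∃ q r, r < d ∧ s = q * d + r :=
    ⟨s / d, s % d, Nat.mod_lt _ hd, (Nat.div_add_mod' s d).symm⟩
  have hdivmod : ∀ {x Q R}, R < d → x = Q * d + R → x / d = Q ∧ x % d = R := fun hR hx =>
    (Nat.div_mod_unique hd).2 ⟨by rw [hx]; ring, hR⟩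
  have hq : q < M := by
    by_contra! hq
    have := Nat.mul_le_mul_right d hq
    omega
  have hq1 : (q + 1) * d ≤ M * d := Nat.mul_le_mul_right d hq
  have hq1' : (q + 1) * d = q * d + d := by ring
  rw [(hdivmod hr rfl).1, (hdivmod hr rfl).2]
  rcases lt_or_ge (r + k) d with hrk | hrk
  · obtain ⟨h1, h2⟩ := hdivmod hrk (by ring : q * d + r + k = q * d + (r + k))
    rw [Nat.mod_eq_of_lt (by omega), h1, h2]
    left; omega
  rcases lt_or_ge (q + 1) M with hqM | hqM
  · have hq2 : (q + 2) * d ≤ M * d := Nat.mul_le_mul_right d hqM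
    have hq2' : (q + 2) * d = q * d + 2 * d := by ring
    obtain ⟨h1, h2⟩ := hdivmod (by omega : r + k - d < d)
      (by rw [hq1']; omega : q * d + r + k = (q + 1) * d + (r + k - d))
    rw [Nat.mod_eq_of_lt (by omega), h1, h2]
    right; left; omega
  · have hwrap : (q * d + r + k) % (M * d) = r + k - d := by
      rw [show q * d + r + k = r + k - d + M * d by rw [← show q + 1 = M by omega, hq1']; omega,
        Nat.add_mod_right, Nat.mod_eq_of_lt (by omega)]
    rw [hwrap, Nat.div_eq_of_lt (by omega), Nat.mod_eq_of_lt (by omega)]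
    right; right; omega

lemma doubleTree_adj_append {d h : ℕ} {b : Bool} {l : List ℕ} {a : ℕ}
    (hv : dtValid d h (b, l ++ [a])) : (doubleTree d h).Adj (b, l) (b, l ++ [a]) := by
  rw [doubleTree, SimpleGraph.fromRel_adj]
  refine ⟨fun e => by simpa using congrArg (fun p => p.2.length) e,
    Or.inl ⟨⟨?_, ?_⟩, hv, Or.inl ⟨rfl, a, rfl⟩⟩⟩
  · have : (l ++ [a]).length ≤ h := hv.1
    simp only [List.length_append, List.length_singleton] at this
    exact (Nat.le_succ _).trans this
  · exact fun x hx => hv.2 x (List.mem_append_left _ hx)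

lemma doubleTree_adj_uLeaf_vLeaf {d h : ℕ} (hd : 0 < d) (hh : 1 ≤ h) (s : ℕ) {k : ℕ}
    (hk : k < d) : (doubleTree d h).Adj (uLeaf d h s) (vLeaf d h (s + k)) := by
  rw [doubleTree, SimpleGraph.fromRel_adj]
  refine ⟨by simp [uLeaf, vLeaf], Or.inl ⟨dtValid_dtLeafList hd h true s,
    dtValid_dtLeafList hd h false (s + k), Or.inr (Or.inr ⟨rfl, rfl, dtLeafList_length d h s,
    dtLeafList_length d h (s + k), ?_⟩)⟩⟩
  simp only [uLeaf, vLeaf, dtOrd_dtLeafList]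
  rw [← Nat.mod_add_mod]
  exact dtCross_add hd hh (Nat.mod_lt _ (by positivity)) hk

lemma doubleTree_isCyclicBand {d h : ℕ} (hd : 0 < d) (hh : 1 ≤ h) :
    IsCyclicBand (doubleTree d h) d (d ^ h) (uLeaf d h) (vLeaf d h) where
  periodic_u t := congrArg (Prod.mk _) ((dtLeafList_eq_iff hd h _ _).2 (Nat.add_mod_right t _))
  periodic_v t := congrArg (Prod.mk _) ((dtLeafList_eq_iff hd h _ _).2 (Nat.add_mod_right t _))
  injOn_u s hs t ht e := by
    simpa [Nat.mod_eq_of_lt hs, Nat.mod_eq_of_lt ht] using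
      (dtLeafList_eq_iff hd h s t).1 (congrArg Prod.snd e)
  injOn_v s hs t ht e := by
    simpa [Nat.mod_eq_of_lt hs, Nat.mod_eq_of_lt ht] using
      (dtLeafList_eq_iff hd h s t).1 (congrArg Prod.snd e)
  u_ne_v _ _ e := by simp [uLeaf, vLeaf] at e
  adj s _ hk := doubleTree_adj_uLeaf_vLeaf hd hh s hk

theorem doubleTree_exists_reachableIn_leaf {d h : ℕ} {S : Set (Bool × List ℕ)} (hS : S.Finite)
    (hcard : S.ncard < d) {b : Bool} {l : List ℕ} (hl : (b, l) ∈ {p | dtValid d h p} \ S) :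
    ∃ t, (doubleTree d h).ReachableIn ({p | dtValid d h p} \ S) (b, l) (b, dtLeafList d h t) := by
  by_cases hlen : l.length = h
  · subst hlen
    exact ⟨dtOrd d l, by rw [dtLeafList_dtOrd hl.1.2]; exact .refl hl⟩
  obtain ⟨a, ha, haS⟩ := exists_lt_notMem_of_ncard_lt hS hcard (f := fun a => (b, l ++ [a]))
    fun a _ a' _ e => by simpa using e
  have hlt : l.length < h := lt_of_le_of_ne hl.1.1 hlen
  have hv : dtValid d h (b, l ++ [a]) := by
    refine ⟨by simp only [List.length_append, List.length_singleton]; omega, fun x hx => ?_⟩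
    rcases List.mem_append.1 hx with hx | hx
    · exact hl.1.2 x hx
    · rwa [List.mem_singleton.1 hx]
  obtain ⟨t, ht⟩ := doubleTree_exists_reachableIn_leaf hS hcard
    (show _ ∈ _ \ _ from ⟨hv, haS⟩)
  exact ⟨t, ((doubleTree_adj_append hv).reachableIn hl ⟨hv, haS⟩).trans ht⟩
termination_by h - l.length
decreasing_by simp only [List.length_append, List.length_singleton]; omega

lemma dtValid_finite (d h : ℕ) : {p : Bool × List ℕ | dtValid d h p}.Finite := by
  refine (Set.finite_univ.prod
    ((List.finite_length_le (Fin d) h).image (List.map Fin.val))).subset ?_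
  rintro ⟨b, l⟩ ⟨hlen, hl⟩
  lift l to List (Fin d) using hl
  exact ⟨trivial, l, by simpa using hlen, rfl⟩

/-- The double-tree of degree `d ≥ 2` and height `h ≥ 2` is
`d`-connected: it has more than `d` vertices and deleting any set of fewer
than `d` vertices leaves it connected. -/
theorem doubleTree_d_connected (d h : ℕ) (hd : 2 ≤ d) (hh : 2 ≤ h) :
    d < Set.ncard {p | dtValid d h p} ∧
    ∀ S : Set (Bool × List ℕ), S.Finite → S.ncard < d →
      ((doubleTree d h).induce ({p | dtValid d h p} \ S)).Connected := by
  have hb := doubleTree_isCyclicBand (by omega : 0 < d) (by omega : 1 ≤ h)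
  have hL : d * d ≤ d ^ h := by rw [← sq]; exact Nat.pow_le_pow_right (by omega) hh
  have hleaf (t : ℕ) : uLeaf d h t ∈ {p | dtValid d h p} ∧ vLeaf d h t ∈ {p | dtValid d h p} :=
    ⟨dtValid_dtLeafList (by omega) h true t, dtValid_dtLeafList (by omega) h false t⟩
  refine ⟨?_, fun S hS hcard => ?_⟩
  · have := Set.ncard_le_ncard_of_injOn (s := Set.Iio (d ^ h)) _ (fun t _ => (hleaf t).1)
      hb.injOn_u (dtValid_finite d h)
    rw [Set.ncard_Iio_nat] at this
    nlinarith
  obtain ⟨x₀, hx₀, hhub⟩ := hb.exists_hub hd hL hleaf hS hcard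
  refine SimpleGraph.induce_connected_of_reachableIn hx₀ fun ⟨b, l⟩ hp => ?_
  obtain ⟨t, ht⟩ := doubleTree_exists_reachableIn_leaf hS hcard hp
  cases b
  · exact ht.trans ((hhub t).2 ht.2.1.2)
  · exact ht.trans ((hhub t).1 ht.2.1.2)
end

section
/- Let G be a graph on which, under optimal Tron play, Bob's score is at least Alice's score (Bob achieves at least a tie). Let F be G plus a universal vertex v. Then in the Tron game on F, if Alice starts at v, Bob's first move lands on some vertex of G, Alice's reply can be any remaining vertex of G, and thereafter the game is exactly the Tron game on G with roles exchanged; consequently Alice achieves at least a tie on F. -/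
/-- A state of the Tron game: positions of the two players, the set of
vertices visited so far by either player, and the two scores. -/
structure TronState (V : Type) where
  posA : V
  posB : V
  visited : Finset V
  scoreA : ℕ
  scoreB : ℕ

/-- A player at `p` is stuck if every vertex it could move to is visited. -/
def TronStuck {V : Type} (R : V → V → Prop) (p : V) (vis : Finset V) : Prop :=
  ∀ w, R p w → w ∈ vis

open Classical in
/-- Bob (second player) can force predicate `P` of the two final scores
(Alice's, Bob's), playing on the (possibly directed) edge relation `R`;
`turn = true` means Alice moves next.  A stuck player passes; the game ends
when both players are stuck. -/
def tronForceB {V : Type} [DecidableEq V] (R : V → V → Prop) (P : ℕ → ℕ → Prop) :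
    ℕ → Bool → TronState V → Prop
  | 0, _, s => P s.scoreA s.scoreB
  | f + 1, true, s =>
      if TronStuck R s.posA s.visited then
        if TronStuck R s.posB s.visited then P s.scoreA s.scoreB
        else tronForceB R P f false s
      else
        ∀ w, R s.posA w → w ∉ s.visited →
          tronForceB R P f false ⟨w, s.posB, insert w s.visited, s.scoreA + 1, s.scoreB⟩
  | f + 1, false, s =>
      if TronStuck R s.posB s.visited then
        if TronStuck R s.posA s.visited then P s.scoreA s.scoreB
        else tronForceB R P f true s
      else
        ∃ w, R s.posB w ∧ w ∉ s.visited ∧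
          tronForceB R P f true ⟨s.posA, w, insert w s.visited, s.scoreA, s.scoreB + 1⟩

open Classical in
/-- Alice (first player) can force predicate `P` of the final scores. -/
def tronForceA {V : Type} [DecidableEq V] (R : V → V → Prop) (P : ℕ → ℕ → Prop) :
    ℕ → Bool → TronState V → Prop
  | 0, _, s => P s.scoreA s.scoreB
  | f + 1, true, s =>
      if TronStuck R s.posA s.visited then
        if TronStuck R s.posB s.visited then P s.scoreA s.scoreB
        else tronForceA R P f false s
      else
        ∃ w, R s.posA w ∧ w ∉ s.visited ∧
          tronForceA R P f false ⟨w, s.posB, insert w s.visited, s.scoreA + 1, s.scoreB⟩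
  | f + 1, false, s =>
      if TronStuck R s.posB s.visited then
        if TronStuck R s.posA s.visited then P s.scoreA s.scoreB
        else tronForceA R P f true s
      else
        ∀ w, R s.posB w → w ∉ s.visited →
          tronForceA R P f true ⟨s.posA, w, insert w s.visited, s.scoreA, s.scoreB + 1⟩

open Classical in
/-- Every complete play of the game satisfies `P` of the final scores. -/
def tronInevitable {V : Type} [DecidableEq V] (R : V → V → Prop) (P : ℕ → ℕ → Prop) :
    ℕ → Bool → TronState V → Prop
  | 0, _, s => P s.scoreA s.scoreB
  | f + 1, true, s =>
      if TronStuck R s.posA s.visited then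
        if TronStuck R s.posB s.visited then P s.scoreA s.scoreB
        else tronInevitable R P f false s
      else
        ∀ w, R s.posA w → w ∉ s.visited →
          tronInevitable R P f false ⟨w, s.posB, insert w s.visited, s.scoreA + 1, s.scoreB⟩
  | f + 1, false, s =>
      if TronStuck R s.posB s.visited then
        if TronStuck R s.posA s.visited then P s.scoreA s.scoreB
        else tronInevitable R P f true s
      else
        ∀ w, R s.posB w → w ∉ s.visited →
          tronInevitable R P f true ⟨s.posA, w, insert w s.visited, s.scoreA, s.scoreB + 1⟩

/-- The initial state once Alice has started at `v` and Bob at `w`: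
both vertices are visited, both scores are `1`, and Alice moves first. -/
def tronInit {V : Type} [DecidableEq V] (v w : V) : TronState V :=
  ⟨v, w, {v, w}, 1, 1⟩

/-- Enough fuel for any Tron game on `V` to finish. -/
def tronFuel (V : Type) [Fintype V] : ℕ := 2 * Fintype.card V + 2

/-- In the Tron game on `G` (Alice picks a start vertex, then Bob picks a
different one, then they alternate, Alice first), Bob can force `P`. -/
def bobCanForce {V : Type} [Fintype V] [DecidableEq V] (G : SimpleGraph V)
    (P : ℕ → ℕ → Prop) : Prop :=
  ∀ v : V, ∃ w, w ≠ v ∧ tronForceB G.Adj P (tronFuel V) true (tronInit v w)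

/-- In the Tron game on `G`, Alice can force `P`. -/
def aliceCanForce {V : Type} [Fintype V] [DecidableEq V] (G : SimpleGraph V)
    (P : ℕ → ℕ → Prop) : Prop :=
  ∃ v : V, ∀ w, w ≠ v → tronForceA G.Adj P (tronFuel V) true (tronInit v w)

/-- `G` together with a new universal vertex (`none`) adjacent to everything. -/
def addUniversal {V : Type} (G : SimpleGraph V) : SimpleGraph (Option V) :=
  SimpleGraph.fromRel (fun x y =>
    match x, y with
    | none, some _ => True
    | some a, some b => G.Adj a b
    | _, _ => False)

/-!
Once Alice has started at the universal vertex it is used up, and the rest of the game on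
`addUniversal G` is the game on `G` with the roles exchanged: Bob's start plays the part of Alice's
start in `G`, Alice's first move that of Bob's reply, and afterwards each player moves as the other
one would in `G`. Alice therefore answers Bob's start `v` with Bob's winning reply to `v` in `G`
and copies Bob's strategy from then on; her score is Bob's score in `G` plus one for the
universal vertex. The game on `addUniversal G` gets one more unit of fuel than the game on `G`,
which is harmless: once the fuel exceeds twice the number of free vertices, more fuel does not
change the outcome.
-/

lemma Finset.insertNone_insert {α : Type*} [DecidableEq α] (a : α) (s : Finset α) :
    insertNone (insert a s) = insert (some a) (insertNone s) := by
  ext (_ | x) <;> simp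

lemma Finset.card_compl_insert_add_one {α : Type*} [Fintype α] [DecidableEq α] {a : α}
    {s : Finset α} (ha : a ∉ s) : (insert a s)ᶜ.card + 1 = sᶜ.card := by
  rw [compl_insert, card_erase_add_one (mem_compl.2 ha)]

section Fuel
variable {V : Type} [DecidableEq V]

lemma tronForceA_succ_of_move {R : V → V → Prop} {P : ℕ → ℕ → Prop} {f : ℕ}
    {s : TronState V} (w : V) (hw : R s.posA w) (hv : w ∉ s.visited)
    (h : tronForceA R P f false ⟨w, s.posB, insert w s.visited, s.scoreA + 1, s.scoreB⟩) :
    tronForceA R P (f + 1) true s := by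
  rw [tronForceA, if_neg fun hs => hv (hs w hw)]
  exact ⟨w, hw, hv, h⟩

variable [Fintype V]

theorem tronForceB_succ_of_card_compl_le (R : V → V → Prop) (P : ℕ → ℕ → Prop)
    (f : ℕ) : ∀ (t : Bool) (s : TronState V), 2 * s.visitedᶜ.card + 2 ≤ f →
      tronForceB R P f t s → tronForceB R P (f + 1) t s := by
  induction f using Nat.strong_induction_on with
  | _ f IH =>
  intro t s hf h
  obtain ⟨g, rfl⟩ : ∃ g, f = g + 2 := ⟨f - 2, by omega⟩
  have hmove : ∀ w ∉ s.visited, 2 * (insert w s.visited)ᶜ.card + 2 ≤ g := fun w hw => by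
    have := Finset.card_compl_insert_add_one hw
    omega
  cases t <;> rw [tronForceB] at h ⊢ <;> split_ifs at h ⊢ with hs ho
  · exact h
  -- a pass is followed by a move, and the bound leaves room for both half-turns
  · rw [tronForceB, if_neg ho] at h ⊢
    exact fun w hw hv => IH g (by omega) _ _ (hmove w hv) (h w hw hv)
  · obtain ⟨w, hw, hv, h⟩ := h
    exact ⟨w, hw, hv, IH (g + 1) (by omega) _ _ (hmove w hv).step h⟩
  · exact h
  · rw [tronForceB, if_neg ho] at h ⊢
    obtain ⟨w, hw, hv, h⟩ := h
    exact ⟨w, hw, hv, IH g (by omega) _ _ (hmove w hv) h⟩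
  · exact fun w hw hv => IH (g + 1) (by omega) _ _ (hmove w hv).step (h w hw hv)

lemma two_mul_card_compl_visited_add_two_le_tronFuel (s : TronState V) :
    2 * s.visitedᶜ.card + 2 ≤ tronFuel V := by
  have := Finset.card_le_univ s.visitedᶜ
  unfold tronFuel
  omega

end Fuel

lemma tronFuel_option (V : Type) [Fintype V] : tronFuel (Option V) = tronFuel V + 1 + 1 := by
  simp only [tronFuel, Fintype.card_option]
  ring

section AddUniversal
variable {V : Type} (G : SimpleGraph V)

@[simp]
lemma addUniversal_adj_some_some {a b : V} :
    (addUniversal G).Adj (some a) (some b) ↔ G.Adj a b := by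
  simp only [addUniversal, SimpleGraph.fromRel_adj, ne_eq, Option.some.injEq]
  exact ⟨fun h => h.2.elim id G.adj_symm, fun h => ⟨G.ne_of_adj h, Or.inl h⟩⟩

lemma addUniversal_adj_none_some (a : V) : (addUniversal G).Adj none (some a) := by
  simp [addUniversal]

lemma tronStuck_addUniversal_some_iff {x : V} {s : Finset V} :
    TronStuck (addUniversal G).Adj (some x) s.insertNone ↔ TronStuck G.Adj x s := by
  refine ⟨fun h w hw => ?_, fun h => ?_⟩
  · simpa using h (some w) ((addUniversal_adj_some_some G).2 hw)
  · rintro (_ | w) hw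
    · exact Finset.none_mem_insertNone
    · simpa using h w ((addUniversal_adj_some_some G).1 hw)

end AddUniversal

namespace TronState
variable {V : Type}

/-- The position of the game on `addUniversal G`, after Alice started at the universal vertex,
corresponding to the position `s` of the game on `G` with the roles exchanged. -/
def roleExchange (s : TronState V) : TronState (Option V) :=
  ⟨some s.posB, some s.posA, s.visited.insertNone, s.scoreB + 1, s.scoreA⟩

lemma roleExchange_tronInit [DecidableEq V] (v w : V) :
    (tronInit v w).roleExchange =
      ⟨some w, some v, insert (some w) {none, some v}, 1 + 1, 1⟩ := by
  simp only [roleExchange, tronInit, mk.injEq, true_and, and_true]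
  ext (_ | x) <;> simp [or_comm]

end TronState

theorem tronForceA_roleExchange_of_tronForceB {V : Type} [DecidableEq V] (G : SimpleGraph V)
    {P P' : ℕ → ℕ → Prop} (hP : ∀ a b, P a b → P' (b + 1) a) (f : ℕ) :
    ∀ (t : Bool) (s : TronState V), tronForceB G.Adj P f t s →
      tronForceA (addUniversal G).Adj P' f (!t) s.roleExchange := by
  induction f with
  | zero => exact fun _ _ h => hP _ _ h
  | succ f IH =>
  classical
  intro t s h
  cases t <;> rw [tronForceB] at h <;> simp only [Bool.not_false, Bool.not_true] <;>
    rw [tronForceA] <;>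
    simp only [TronState.roleExchange, tronStuck_addUniversal_some_iff] <;> split_ifs at h ⊢
  · exact hP _ _ h
  · exact IH _ _ h
  · obtain ⟨w, hw, hv, h⟩ := h
    refine ⟨some w, (addUniversal_adj_some_some G).2 hw, by simpa using hv, ?_⟩
    simpa [TronState.roleExchange, Finset.insertNone_insert] using IH _ _ h
  · exact hP _ _ h
  · exact IH _ _ h
  · rintro (_ | w) hw hv
    · exact absurd Finset.none_mem_insertNone hv
    · simpa [TronState.roleExchange, Finset.insertNone_insert] using
        IH _ _ (h w ((addUniversal_adj_some_some G).1 hw) (by simpa using hv))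

/-- If on `G` Bob can guarantee at least a tie, and `F` is
`G` plus a universal vertex `v`, then on `F` Alice, starting at `v` (whereupon
Bob's first move lands in `G` and the game continues as the game on `G` with
the roles exchanged), guarantees at least a tie; in particular Alice achieves
at least a tie on `F`. -/
theorem tron_universal_vertex_role_exchange
    {V : Type} [Fintype V] [DecidableEq V] (G : SimpleGraph V)
    (htie : bobCanForce G (fun a b => a ≤ b)) :
    (∀ w : Option V, w ≠ none →
      tronForceA (addUniversal G).Adj (fun a b => b ≤ a)
        (tronFuel (Option V)) true (tronInit none w)) ∧
    aliceCanForce (addUniversal G) (fun a b => b ≤ a) := by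
  have hstart : ∀ w : Option V, w ≠ none →
      tronForceA (addUniversal G).Adj (fun a b => b ≤ a)
        (tronFuel (Option V)) true (tronInit none w) := by
    rintro (_ | v) hv
    · exact absurd rfl hv
    obtain ⟨w, hwv, hwin⟩ := htie v
    have hwin' := tronForceB_succ_of_card_compl_le G.Adj _ _ true _
      (two_mul_card_compl_visited_add_two_le_tronFuel _) hwin
    have hexchange := tronForceA_roleExchange_of_tronForceB G (P' := fun a b => b ≤ a)
      (fun a b h => by omega) _ true _ hwin'
    rw [TronState.roleExchange_tronInit] at hexchange
    rw [tronFuel_option]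
    exact tronForceA_succ_of_move (some w) (addUniversal_adj_none_some G w)
      (by simp [tronInit, hwv]) hexchange
  exact ⟨hstart, none, hstart⟩
end
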